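/- Let p be a prime and l ≥ 0. For every k with 0 ≤ k ≤ p^l − 1, the Eulerian number A(p^l − 1, k) is congruent to 1 modulo p. -/

import Mathlib

/-- The Eulerian numbers, defined by the recurrence
`A(n+1,k) = (k+1)·A(n,k) + (n-k+2)·A(n,k-1)` with `A(0,0) = 1`. -/
def eulerian : ℕ → ℕ → ℕ
  | 0, 0 => 1
  | 0, _ + 1 => 0
  | n + 1, 0 => eulerian n 0
  | n + 1, k + 1 => (k + 2) * eulerian n (k + 1) + (n - k + 1) * eulerian n k

/-!
Write `q = p ^ l`. The closed form, which satisfies the same recurrence by Pascal's rule and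
`C(m, j + 1) (j + 1) = C(m, j) (m - j)`, gives
`A(q - 1, k) = ∑_{j ≤ k} (-1)^j C(q + 1, j) (k + 1 - j)^q`. Modulo `p` the Frobenius map
`x ↦ x ^ q` is the identity on `ZMod p`, and `C(q + 1, j)` vanishes for `2 ≤ j < q`, so only the
terms `j = 0, 1` survive: `(k + 1) - (q + 1) k ≡ 1`.
-/

open Finset

lemma eulerian_zero_right : ∀ n, eulerian n 0 = 1
  | 0 => rfl
  | n + 1 => eulerian_zero_right n

lemma eulerian_eq_zero_of_lt : ∀ {n k : ℕ}, n < k → eulerian n k = 0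
  | 0, _ + 1, _ => rfl
  | n + 1, k + 1, h => by
    simp only [eulerian, eulerian_eq_zero_of_lt (n := n) (k := k + 1) (by omega),
      eulerian_eq_zero_of_lt (n := n) (k := k) (by omega), mul_zero, add_zero]

lemma Nat.cast_choose_succ_right_eq {R : Type*} [Ring R] (m j : ℕ) :
    (m.choose (j + 1) : R) * (j + 1) = m.choose j * ((m : R) - j) := by
  rcases le_or_gt j m with h | h
  · rw [← Nat.cast_sub h, ← Nat.cast_add_one, ← Nat.cast_mul, ← Nat.cast_mul,
      Nat.choose_succ_right_eq]
  · simp [Nat.choose_eq_zero_of_lt h, Nat.choose_eq_zero_of_lt (Nat.lt_succ_of_lt h)]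

theorem Nat.Prime.dvd_choose_pow_add_one {p l j : ℕ} (hp : p.Prime) (hj₀ : 2 ≤ j)
    (hj : j < p ^ l) :
    p ∣ (p ^ l + 1).choose j := by
  obtain ⟨i, rfl⟩ := Nat.exists_eq_add_of_lt (show 0 < j by omega)
  rw [zero_add, Nat.choose_succ_succ]
  exact dvd_add (hp.dvd_choose_pow (by omega) (by omega)) (hp.dvd_choose_pow (by omega) (by omega))

section ClosedForm

variable (R : Type*) [CommRing R]

def eulerianSum (n k : ℕ) : R :=
  ∑ j ∈ range (k + 1), (-1) ^ j * ((n + 2).choose j : R) * ((k : R) + 1 - j) ^ (n + 1)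

variable {R}

lemma eulerianSum_zero_right (n : ℕ) : eulerianSum R n 0 = 1 := by
  simp [eulerianSum]

lemma eulerianSum_zero_left {k : ℕ} (hk : 0 < k) : eulerianSum R 0 k = 0 := by
  obtain _ | _ | k := k
  · omega
  · norm_num [eulerianSum, sum_range_succ]
  · rw [eulerianSum, sum_range_succ', sum_range_succ', sum_range_succ', sum_eq_zero fun j _ => by
      simp [Nat.choose_eq_zero_of_lt (show 2 < j + 1 + 1 + 1 by omega)]]
    norm_num
    ring

lemma eulerianSum_succ_succ (n k : ℕ) :
    eulerianSum R (n + 1) (k + 1) =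
      ((k : R) + 2) * eulerianSum R n (k + 1) + ((n : R) + 1 - k) * eulerianSum R n k := by
  have term (j : ℕ) :
      (-1) ^ (j + 1) * ((n + 1 + 2).choose (j + 1) : R) *
          ((k : R) + 1 + 1 - (j + 1)) ^ (n + 1 + 1) =
        ((k : R) + 2) * ((-1) ^ (j + 1) * ((n + 2).choose (j + 1) : R) *
          ((k : R) + 1 + 1 - (j + 1)) ^ (n + 1)) +
        ((n : R) + 1 - k) * ((-1) ^ j * ((n + 2).choose j : R) * ((k : R) + 1 - j) ^ (n + 1)) := by
    have pascal : ((n + 1 + 2).choose (j + 1) : R) = (n + 2).choose j + (n + 2).choose (j + 1) := by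
      rw [Nat.choose_succ_succ (n + 2) j, Nat.cast_add]
    have absorb := Nat.cast_choose_succ_right_eq (R := R) (n + 2) j
    push_cast at absorb
    linear_combination
      (-1) ^ j * ((k : R) + 1 - j) ^ (n + 1) * (absorb - ((k : R) + 1 - j) * pascal)
  simp only [eulerianSum, sum_range_succ' _ (k + 1)]
  push_cast
  rw [sum_congr rfl fun j _ => term j, sum_add_distrib, ← mul_sum, ← mul_sum]
  simp only [pow_zero, Nat.choose_zero_right, Nat.cast_one, one_mul, sub_zero]
  ring

theorem cast_eulerian_eq_eulerianSum (n k : ℕ) : (eulerian n k : R) = eulerianSum R n k := by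
  induction n generalizing k with
  | zero =>
    rcases k with _ | k
    · simp [eulerian, eulerianSum_zero_right]
    · simp [eulerian, eulerianSum_zero_left]
  | succ n ih =>
    rcases k with _ | k
    · simp [eulerian_zero_right, eulerianSum_zero_right]
    · rw [eulerian, eulerianSum_succ_succ, ← ih, ← ih]
      rcases le_or_gt k n with h | h
      · push_cast [Nat.cast_sub h]
        ring
      · simp [eulerian_eq_zero_of_lt h]

end ClosedForm

/-- For a prime `p`, `l ≥ 0`, and `0 ≤ k ≤ p^l − 1`, the Eulerian number
`A(p^l − 1, k)` is congruent to `1` modulo `p`. -/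
theorem eulerian_prime_pow_sub_one_modEq_one (p l k : ℕ) (hp : p.Prime)
    (hk : k ≤ p ^ l - 1) :
    eulerian (p ^ l - 1) k ≡ 1 [MOD p] := by
  have : Fact p.Prime := ⟨hp⟩
  rw [← ZMod.natCast_eq_natCast_iff, cast_eulerian_eq_eulerianSum, Nat.cast_one]
  rcases k with _ | k
  · exact eulerianSum_zero_right _
  have hl : l ≠ 0 := by rintro rfl; simp at hk
  have choose_eq_zero (j : ℕ) (hj : j ∈ range k) :
      ((p ^ l + 1).choose (j + 1 + 1) : ZMod p) = 0 :=
    (ZMod.natCast_eq_zero_iff _ p).2 <|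
      hp.dvd_choose_pow_add_one (by omega) (by rw [mem_range] at hj; omega)
  rw [eulerianSum, show p ^ l - 1 + 1 = p ^ l by omega, show p ^ l - 1 + 2 = p ^ l + 1 by omega,
    sum_range_succ', sum_range_succ',
    sum_eq_zero fun j hj => by rw [choose_eq_zero j hj, mul_zero, zero_mul]]
  simp only [zero_add, Nat.choose_zero_right, Nat.choose_one_right, ZMod.pow_card_pow]
  push_cast [ZMod.natCast_self, zero_pow hl]
  ring
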